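/- arXiv:1803.06623 — 2 statements merged into one kernel-verified Lean document; each statement's English description precedes it below -/
import Mathlib

section
/- For n ≥ 1 and 1 ≤ p < ∞, the norm on S_n^p given by ‖f‖ = ‖f‖_∞ + ‖f'‖_∞ + ⋯ + ‖f^{(n-1)}‖_∞ + ‖f^{(n)}‖_{H^p} is equivalent to the recursively defined norm ‖f‖_{S_n^p}. -/
open MeasureTheory Metric Set Filter

/-- The Hardy space `p`-norm on the unit disk (as an extended real). -/
noncomputable def hardyNorm (p : ℝ) (f : ℂ → ℂ) : ENNReal :=
  ⨆ r : Set.Ioo (0:ℝ) 1,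
    ((∫⁻ θ in Set.Ioc (0:ℝ) (2*Real.pi),
        ENNReal.ofReal (‖f ((r:ℝ) * Complex.exp (θ * Complex.I))‖ ^ p)) /
      ENNReal.ofReal (2*Real.pi)) ^ (1/p)

/-- Sup norm over the unit disk. -/
noncomputable def supNorm (f : ℂ → ℂ) : ENNReal :=
  ⨆ z ∈ Metric.ball (0:ℂ) 1, ENNReal.ofReal (‖f z‖)

/-- The recursively defined norm of `S_n^p`: `‖f‖_{S_n^p} = |f 0| + ‖f'‖_{S_{n-1}^p}`. -/
noncomputable def snNorm : ℕ → ℝ → (ℂ → ℂ) → ENNReal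
  | 0, p, f => hardyNorm p f
  | n+1, p, f => ENNReal.ofReal (‖f 0‖) + snNorm n p (deriv f)

/-- Membership in the Hardy space `H^p` of the unit disk. -/
def MemHp (p : ℝ) (f : ℂ → ℂ) : Prop :=
  DifferentiableOn ℂ f (Metric.ball 0 1) ∧ hardyNorm p f < ⊤

/-- Membership in `S_n^p`: analytic on the disk with `n`-th derivative in `H^p`. -/
def MemS (n : ℕ) (p : ℝ) (f : ℂ → ℂ) : Prop :=
  DifferentiableOn ℂ f (Metric.ball 0 1) ∧ hardyNorm p (iteratedDeriv n f) < ⊤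

/-- Membership in `S_{n,0}^p`: members of `S_n^p` whose first `n` Taylor coefficients vanish. -/
def MemS0 (n : ℕ) (p : ℝ) (f : ℂ → ℂ) : Prop :=
  MemS n p f ∧ ∀ m < n, iteratedDeriv m f 0 = 0

/-- `(V_n f)(z) = (1/(n-1)!) ∫_0^z (z-ζ)^{n-1} f(ζ) dζ`, along the segment `ζ = t z`. -/
noncomputable def Vop (n : ℕ) (f : ℂ → ℂ) (z : ℂ) : ℂ :=
  (1 / (Nat.factorial (n-1) : ℂ)) *
    ∫ t in (0:ℝ)..1, z * (z - (t:ℂ) * z) ^ (n-1) * f ((t:ℂ) * z)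

/-- The Volterra operator `(T_z f)(z) = ∫_0^z f(ω) dω` along the segment. -/
noncomputable def Volterra (f : ℂ → ℂ) (z : ℂ) : ℂ :=
  ∫ t in (0:ℝ)..1, z * f ((t:ℂ) * z)

/-!
Since `snNorm n p f = ∑_{k<n} |f⁽ᵏ⁾(0)| + ‖f⁽ⁿ⁾‖_{H^p}`, one inequality is trivial. For the other,
everything reduces to `‖f‖_∞ ≤ |f(0)| + π ‖f'‖_{H^1}`, i.e. to the estimate
`|∫_0^z g| ≤ π ρ · avg_{|ζ|=ρ} |g|` for `|z| < ρ`. Integrating Cauchy's formula along `[0, z]`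
writes `∫_0^z g` as the circle average of `g` against the kernel `-ζ log(1 - z/ζ)`, whose real part
is unbounded. Adding `ζ log(1 - z̄ζ/ρ²)` does not change the average (its product with `g` is
holomorphic on the closed disc and vanishes at `0`), and on the circle it is the conjugate term, so
the kernel becomes `-2iζ · arg(1 - z/ζ)`, of modulus at most `πρ`. Induction on `n`, using
`‖g‖_{H^1} ≤ ‖g‖_∞` and `‖g‖_{H^1} ≤ ‖g‖_{H^p}`, gives the constant `(1 + π)ⁿ`.
-/

open Complex ComplexConjugate ProbabilityTheory
open Real hiding log

instance : IsProbabilityMeasure (volume[|Ioc (0:ℝ) (2 * π)]) :=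
  cond_isProbabilityMeasure_of_finite (by simp [pi_pos]) (by simp [ENNReal.mul_eq_top])

lemma lintegral_cond_Ioc_two_pi (F : ℝ → ENNReal) :
    ∫⁻ θ, F θ ∂(volume[|Ioc (0:ℝ) (2 * π)]) =
      (∫⁻ θ in Ioc (0:ℝ) (2 * π), F θ) / ENNReal.ofReal (2 * π) := by
  rw [ProbabilityTheory.cond, lintegral_smul_measure, Real.volume_Ioc, sub_zero, smul_eq_mul,
    div_eq_mul_inv, mul_comm]

lemma hardyNorm_eq_iSup_eLpNorm' {p : ℝ} (hp : 0 ≤ p) (g : ℂ → ℂ) :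
    hardyNorm p g = ⨆ r : Ioo (0:ℝ) 1,
      eLpNorm' (fun θ => g (circleMap 0 r θ)) p (volume[|Ioc (0:ℝ) (2 * π)]) := by
  refine iSup_congr fun r => ?_
  simp only [eLpNorm'_eq_lintegral_enorm, lintegral_cond_Ioc_two_pi, circleMap_zero,
    ← ofReal_norm, ENNReal.ofReal_rpow_of_nonneg (norm_nonneg _) hp]

lemma hardyNorm_one_le_hardyNorm {p : ℝ} (hp : 1 ≤ p) {g : ℂ → ℂ}
    (hg : ContinuousOn g (ball 0 1)) : hardyNorm 1 g ≤ hardyNorm p g := by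
  rw [hardyNorm_eq_iSup_eLpNorm' zero_le_one, hardyNorm_eq_iSup_eLpNorm' (by linarith)]
  refine iSup_mono fun r => eLpNorm'_le_eLpNorm'_of_exponent_le one_pos hp _ ?_
  refine (hg.comp_continuous (continuous_circleMap 0 r) fun θ => ?_).aestronglyMeasurable
  simpa [abs_of_pos r.2.1] using r.2.2

lemma hardyNorm_one_le_supNorm (g : ℂ → ℂ) : hardyNorm 1 g ≤ supNorm g := by
  rw [hardyNorm_eq_iSup_eLpNorm' zero_le_one]
  refine iSup_le fun r => ?_
  have hr : ∀ θ, circleMap 0 r θ ∈ ball (0:ℂ) 1 := fun θ => by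
    simpa [abs_of_pos r.2.1] using r.2.2
  calc eLpNorm' (fun θ => g (circleMap 0 r θ)) 1 (volume[|Ioc (0:ℝ) (2 * π)])
      ≤ ∫⁻ _, supNorm g ∂(volume[|Ioc (0:ℝ) (2 * π)]) := by
        simp only [eLpNorm'_eq_lintegral_enorm, ENNReal.rpow_one, div_one]
        exact lintegral_mono fun θ => le_iSup₂_of_le (circleMap 0 r θ) (hr θ) (ofReal_norm _).ge
    _ = supNorm g := by simp

lemma ofReal_circleAverage_norm_le_hardyNorm_one {g : ℂ → ℂ} {R : ℝ} (hR₀ : 0 < R) (hR₁ : R < 1)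
    (hg : CircleIntegrable g 0 R) :
    ENNReal.ofReal (circleAverage (‖g ·‖) 0 R) ≤ hardyNorm 1 g := by
  have h : ENNReal.ofReal (circleAverage (‖g ·‖) 0 R) =
      eLpNorm' (fun θ => g (circleMap 0 R θ)) 1 (volume[|Ioc (0:ℝ) (2 * π)]) := by
    rw [circleAverage_def, intervalIntegral.integral_of_le two_pi_pos.le, smul_eq_mul,
      ENNReal.ofReal_mul (by positivity), ofReal_integral_norm_eq_lintegral_enorm hg.1,
      eLpNorm'_eq_lintegral_enorm, lintegral_cond_Ioc_two_pi,
      ENNReal.ofReal_inv_of_pos two_pi_pos]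
    simp [div_eq_mul_inv, mul_comm]
  rw [h, hardyNorm_eq_iSup_eLpNorm' zero_le_one]
  exact le_iSup (fun r : Ioo (0:ℝ) 1 => eLpNorm' (fun θ => g (circleMap 0 r θ)) 1
    (volume[|Ioc (0:ℝ) (2 * π)])) ⟨R, hR₀, hR₁⟩

lemma norm_circleAverage_le_of_norm_le {E : Type*} [NormedAddCommGroup E] [NormedSpace ℝ E]
    {f : ℂ → E} {g : ℂ → ℝ} {c : ℂ} {R : ℝ} (hg : CircleIntegrable g c R)
    (h : ∀ ζ ∈ sphere c |R|, ‖f ζ‖ ≤ g ζ) : ‖circleAverage f c R‖ ≤ circleAverage g c R := by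
  rw [circleAverage_def, circleAverage_def, norm_smul, Real.norm_of_nonneg (by positivity),
    smul_eq_mul]
  gcongr
  exact intervalIntegral.norm_integral_le_of_norm_le two_pi_pos.le
    (Eventually.of_forall fun θ _ => h _ (circleMap_mem_sphere' c R θ)) hg

lemma circleAverage_intervalIntegral_comm {E : Type*} [NormedAddCommGroup E] [NormedSpace ℝ E]
    [CompleteSpace E] {F : ℝ → ℂ → E} {a b : ℝ} {c : ℂ} {R : ℝ}
    (hF : ContinuousOn (Function.uncurry F) (uIcc a b ×ˢ sphere c |R|)) :
    circleAverage (fun ζ => ∫ t in a..b, F t ζ) c R = ∫ t in a..b, circleAverage (F t) c R := by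
  simp only [circleAverage_def, intervalIntegral.integral_smul]
  congr 1
  refine intervalIntegral_intervalIntegral_swap ?_
  have hcont : ContinuousOn (fun q : ℝ × ℝ => F q.2 (circleMap c R q.1))
      (uIcc 0 (2 * π) ×ˢ uIcc a b) :=
    hF.comp (f := fun q : ℝ × ℝ => (q.2, circleMap c R q.1)) (by fun_prop)
      fun q hq => ⟨hq.2, circleMap_mem_sphere' c R q.1⟩
  exact (hcont.integrableOn_compact (isCompact_uIcc.prod isCompact_uIcc)).mono_set
    (prod_mono uIoc_subset_uIcc uIoc_subset_uIcc)

lemma DiffContOnCl.continuousOn_sphere {g : ℂ → ℂ} {c : ℂ} {R : ℝ}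
    (hg : DiffContOnCl ℂ g (ball c R)) (hR : 0 < R) : ContinuousOn g (sphere c R) :=
  hg.continuousOn.mono (closure_ball c hR.ne' ▸ sphere_subset_closedBall)

lemma norm_ofReal_mul_lt {t : ℝ} (ht : t ∈ uIcc 0 1) {z : ℂ} {R : ℝ} (hz : ‖z‖ < R) :
    ‖(t:ℂ) * z‖ < R := by
  rw [uIcc_of_le zero_le_one] at ht
  rw [norm_mul, norm_real, norm_of_nonneg ht.1]
  nlinarith [norm_nonneg z, ht.2]

lemma one_sub_mem_slitPlane {w : ℂ} (hw : ‖w‖ < 1) : 1 - w ∈ slitPlane := by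
  simpa [sub_eq_add_neg] using mem_slitPlane_of_norm_lt_one (z := -w) (by simpa)

lemma norm_div_lt_one_of_norm_lt {z w : ℂ} (h : ‖z‖ < ‖w‖) : ‖z / w‖ < 1 := by
  rwa [norm_div, div_lt_one ((norm_nonneg z).trans_lt h)]

lemma eq_add_volterra_deriv {f : ℂ → ℂ} {R : ℝ} (hf : DifferentiableOn ℂ f (ball 0 R)) {z : ℂ}
    (hz : z ∈ ball 0 R) : f z = f 0 + Volterra (deriv f) z := by
  have hmem : ∀ t ∈ uIcc (0:ℝ) 1, (t:ℂ) * z ∈ ball (0:ℂ) R := fun t ht =>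
    mem_ball_zero_iff.2 (norm_ofReal_mul_lt ht (mem_ball_zero_iff.1 hz))
  have hderiv : ∀ t ∈ uIcc (0:ℝ) 1,
      HasDerivAt (fun s : ℝ => f (s * z)) (z * deriv f (t * z)) t := fun t ht => by
    have hft := (hf.differentiableAt (isOpen_ball.mem_nhds (hmem t ht))).hasDerivAt
    simpa [mul_comm] using (hft.comp (t:ℂ) ((hasDerivAt_id (t:ℂ)).mul_const z)).comp_ofReal
  have hcont : ContinuousOn (fun t : ℝ => z * deriv f (t * z)) (uIcc 0 1) :=
    continuousOn_const.mul <| (hf.deriv isOpen_ball).continuousOn.comp (by fun_prop) hmem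
  rw [Volterra, intervalIntegral.integral_eq_sub_of_hasDerivAt hderiv hcont.intervalIntegrable]
  simp

lemma neg_mul_log_one_sub_div {z c : ℂ} (hzc : ‖z‖ < ‖c‖) :
    -c * log (1 - z / c) = ∫ t in (0:ℝ)..1, z * c / (c - t * z) := by
  have hc : c ≠ 0 := norm_pos_iff.1 ((norm_nonneg z).trans_lt hzc)
  have hlt : ∀ t ∈ uIcc (0:ℝ) 1, ‖(t:ℂ) * z‖ < ‖c‖ := fun t ht => norm_ofReal_mul_lt ht hzc
  have hden : ∀ t ∈ uIcc (0:ℝ) 1, c - t * z ≠ 0 := fun t ht h =>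
    (hlt t ht).ne' (congrArg norm (sub_eq_zero.1 h))
  have hderiv : ∀ t ∈ uIcc (0:ℝ) 1,
      HasDerivAt (fun s : ℝ => -c * log (1 - s * z / c)) (z * c / (c - t * z)) t := by
    intro t ht
    have hslit := one_sub_mem_slitPlane (norm_div_lt_one_of_norm_lt (hlt t ht))
    have := ((((hasDerivAt_id (t:ℂ)).mul_const z).div_const c).const_sub 1).comp_ofReal.clog_real
      hslit
    refine (this.const_mul (-c)).congr_deriv ?_
    rw [id, one_mul, one_sub_div hc, div_div_eq_mul_div]
    field_simp
  rw [intervalIntegral.integral_eq_sub_of_hasDerivAt hderiv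
    ((ContinuousOn.div continuousOn_const (by fun_prop) hden).intervalIntegrable)]
  simp

lemma circleAverage_neg_mul_log_mul_eq_volterra {g : ℂ → ℂ} {R : ℝ}
    (hg : DiffContOnCl ℂ g (ball 0 R)) {z : ℂ} (hz : ‖z‖ < R) :
    circleAverage (fun ζ => -ζ * log (1 - z / ζ) * g ζ) 0 R = Volterra g z := by
  have hR₀ : 0 < R := (norm_nonneg z).trans_lt hz
  have hR : |R| = R := abs_of_pos hR₀
  have hsphere : ∀ ζ ∈ sphere (0:ℂ) |R|, ‖z‖ < ‖ζ‖ := fun ζ hζ => by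
    rwa [mem_sphere_zero_iff_norm.1 hζ, hR]
  have hgc : ContinuousOn g (sphere 0 |R|) := by
    rw [hR]
    exact hg.continuousOn_sphere hR₀
  have hzg : DiffContOnCl ℂ (fun ζ => z * g ζ) (ball 0 |R|) := by
    rw [hR]
    exact hg.const_smul z
  calc circleAverage (fun ζ => -ζ * log (1 - z / ζ) * g ζ) 0 R
      = circleAverage (fun ζ => ∫ t in (0:ℝ)..1, (ζ - 0) / (ζ - t * z) * (z * g ζ)) 0 R := by
        refine circleAverage_congr_sphere fun ζ hζ => ?_
        rw [neg_mul_log_one_sub_div (hsphere ζ hζ), ← intervalIntegral.integral_mul_const]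
        refine intervalIntegral.integral_congr fun t _ => ?_
        rw [sub_zero]
        ring
    _ = ∫ t in (0:ℝ)..1, circleAverage (fun ζ => (ζ - 0) / (ζ - t * z) * (z * g ζ)) 0 R := by
        refine circleAverage_intervalIntegral_comm <| ContinuousOn.mul ?_ ?_
        · refine ContinuousOn.div (by fun_prop) (by fun_prop) fun q hq => sub_ne_zero.2 fun h => ?_
          exact (norm_ofReal_mul_lt hq.1 (hsphere q.2 hq.2)).ne (congrArg norm h.symm)
        · exact continuousOn_const.mul (hgc.comp continuousOn_snd fun q hq => hq.2)
    _ = Volterra g z := intervalIntegral.integral_congr fun t ht =>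
        hzg.circleAverage_smul_div <| mem_ball_zero_iff.2 <| hR.symm ▸ norm_ofReal_mul_lt ht hz

lemma differentiableOn_mul_log_one_sub_conj_mul {z : ℂ} {R : ℝ} (hz : ‖z‖ < R) :
    DifferentiableOn ℂ (fun ζ => ζ * log (1 - conj z * ζ / R ^ 2)) (closedBall 0 R) :=
  fun ζ hζ => by
    have hR₀ : 0 < R := (norm_nonneg z).trans_lt hz
    refine (differentiableAt_id.mul (DifferentiableAt.clog (by fun_prop) ?_)).differentiableWithinAt
    refine one_sub_mem_slitPlane ?_
    rw [norm_div, norm_mul, norm_conj, norm_pow, norm_real, norm_of_nonneg hR₀.le,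
      div_lt_one (by positivity), sq]
    nlinarith [norm_nonneg z, mem_closedBall_zero_iff.1 hζ]

lemma circleAverage_mul_log_conj_mul_eq_zero {g : ℂ → ℂ} {R : ℝ}
    (hg : DiffContOnCl ℂ g (ball 0 R)) {z : ℂ} (hz : ‖z‖ < R) :
    circleAverage (fun ζ => ζ * log (1 - conj z * ζ / R ^ 2) * g ζ) 0 R = 0 := by
  have h : DiffContOnCl ℂ (fun ζ => ζ * log (1 - conj z * ζ / R ^ 2) * g ζ) (ball 0 |R|) := by
    rw [abs_of_pos ((norm_nonneg z).trans_lt hz)]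
    exact ((differentiableOn_mul_log_one_sub_conj_mul hz).diffContOnCl_ball le_rfl).smul hg
  simpa using h.circleAverage

lemma continuousOn_neg_mul_log_one_sub_div {z : ℂ} {R : ℝ} (hz : ‖z‖ < R) :
    ContinuousOn (fun ζ => -ζ * log (1 - z / ζ)) (sphere 0 R) := fun ζ hζ => by
  rw [mem_sphere_zero_iff_norm] at hζ
  have hζ₀ : ζ ≠ 0 := norm_pos_iff.1 (hζ ▸ (norm_nonneg z).trans_lt hz)
  have hslit := one_sub_mem_slitPlane (norm_div_lt_one_of_norm_lt (hζ ▸ hz))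
  exact (continuousAt_id.neg.mul ((continuousAt_const.sub
    (continuousAt_const.div continuousAt_id hζ₀)).clog hslit)).continuousWithinAt

lemma norm_log_kernel_le {z ζ : ℂ} {R : ℝ} (hζ : ‖ζ‖ = R) (hz : ‖z‖ < R) :
    ‖-ζ * log (1 - z / ζ) + ζ * log (1 - conj z * ζ / R ^ 2)‖ ≤ π * R := by
  have hζ₀ : ζ ≠ 0 := norm_pos_iff.1 (hζ ▸ (norm_nonneg z).trans_lt hz)
  have hw : ‖z / ζ‖ < 1 := norm_div_lt_one_of_norm_lt (hζ ▸ hz)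
  have hconj : 1 - conj z * ζ / R ^ 2 = conj (1 - z / ζ) := by
    rw [map_sub, map_one, map_div₀, ← hζ, ← mul_conj', mul_comm ζ, mul_div_mul_right _ _ hζ₀]
  have harg : |arg (1 - z / ζ)| ≤ π / 2 := by
    refine abs_arg_le_pi_div_two_iff.2 ?_
    rw [sub_re, one_re, sub_nonneg]
    exact (re_le_norm _).trans hw.le
  rw [hconj, log_conj _ (slitPlane_arg_ne_pi (one_sub_mem_slitPlane hw)),
    show -ζ * log (1 - z / ζ) + ζ * conj (log (1 - z / ζ))
      = -ζ * (log (1 - z / ζ) - conj (log (1 - z / ζ))) by ring, sub_conj, log_im]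
  simp only [norm_mul, norm_neg, hζ, norm_real, norm_I, mul_one, Real.norm_eq_abs, abs_two]
  have hR : 0 ≤ R := hζ ▸ norm_nonneg ζ
  nlinarith

theorem norm_volterra_le_circleAverage {g : ℂ → ℂ} {R : ℝ} (hg : DiffContOnCl ℂ g (ball 0 R))
    {z : ℂ} (hz : ‖z‖ < R) : ‖Volterra g z‖ ≤ π * R * circleAverage (‖g ·‖) 0 R := by
  have hR₀ : 0 < R := (norm_nonneg z).trans_lt hz
  have hgc := hg.continuousOn_sphere hR₀
  have h₁ : CircleIntegrable (fun ζ => -ζ * log (1 - z / ζ) * g ζ) 0 R :=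
    ((continuousOn_neg_mul_log_one_sub_div hz).mul hgc).circleIntegrable hR₀.le
  have h₂ : CircleIntegrable (fun ζ => ζ * log (1 - conj z * ζ / R ^ 2) * g ζ) 0 R :=
    (((differentiableOn_mul_log_one_sub_conj_mul hz).continuousOn.mono
      sphere_subset_closedBall).mul hgc).circleIntegrable hR₀.le
  have hV : Volterra g z = circleAverage (fun ζ =>
      (-ζ * log (1 - z / ζ) + ζ * log (1 - conj z * ζ / R ^ 2)) * g ζ) 0 R := by
    simp only [add_mul]
    rw [circleAverage_fun_add h₁ h₂, circleAverage_mul_log_conj_mul_eq_zero hg hz, add_zero,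
      circleAverage_neg_mul_log_mul_eq_volterra hg hz]
  calc ‖Volterra g z‖
      ≤ circleAverage (fun ζ => π * R * ‖g ζ‖) 0 R := by
        rw [hV]
        refine norm_circleAverage_le_of_norm_le
          ((continuousOn_const.mul hgc.norm).circleIntegrable hR₀.le) fun ζ hζ => ?_
        rw [norm_mul]
        gcongr
        exact norm_log_kernel_le (by simpa [abs_of_pos hR₀] using hζ) hz
    _ = π * R * circleAverage (‖g ·‖) 0 R := circleAverage_fun_smul (a := π * R) (f := (‖g ·‖))

lemma ofReal_norm_volterra_le_hardyNorm_one {g : ℂ → ℂ} (hg : DifferentiableOn ℂ g (ball 0 1))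
    {z : ℂ} (hz : z ∈ ball 0 1) :
    ENNReal.ofReal ‖Volterra g z‖ ≤ ENNReal.ofReal π * hardyNorm 1 g := by
  rw [mem_ball_zero_iff] at hz
  set R := (‖z‖ + 1) / 2 with hR
  have hR₀ : 0 < R := by positivity
  have hR₁ : R < 1 := by linarith
  have hgR : DiffContOnCl ℂ g (ball 0 R) :=
    (hg.mono (closedBall_subset_ball hR₁)).diffContOnCl_ball le_rfl
  calc ENNReal.ofReal ‖Volterra g z‖
      ≤ ENNReal.ofReal (π * R) * ENNReal.ofReal (circleAverage (‖g ·‖) 0 R) := by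
        rw [← ENNReal.ofReal_mul (by positivity)]
        exact ENNReal.ofReal_le_ofReal (norm_volterra_le_circleAverage hgR (by linarith))
    _ ≤ ENNReal.ofReal π * hardyNorm 1 g := by
        gcongr
        · exact mul_le_of_le_one_right pi_pos.le hR₁.le
        · exact ofReal_circleAverage_norm_le_hardyNorm_one hR₀ hR₁
            ((hgR.continuousOn_sphere hR₀).circleIntegrable hR₀.le)

lemma supNorm_le_add_hardyNorm_one_deriv {f : ℂ → ℂ} (hf : DifferentiableOn ℂ f (ball 0 1)) :
    supNorm f ≤ ENNReal.ofReal ‖f 0‖ + ENNReal.ofReal π * hardyNorm 1 (deriv f) :=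
  iSup₂_le fun z hz => by
    rw [eq_add_volterra_deriv hf hz]
    exact (ENNReal.ofReal_le_ofReal (norm_add_le _ _)).trans <| ENNReal.ofReal_add_le.trans <|
      add_le_add_right (ofReal_norm_volterra_le_hardyNorm_one (hf.deriv isOpen_ball) hz) _

noncomputable def supSumNorm (n : ℕ) (p : ℝ) (f : ℂ → ℂ) : ENNReal :=
  ∑ k ∈ Finset.range n, supNorm (iteratedDeriv k f) + hardyNorm p (iteratedDeriv n f)

lemma supSumNorm_zero (p : ℝ) (f : ℂ → ℂ) : supSumNorm 0 p f = hardyNorm p f := by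
  simp [supSumNorm]

lemma supSumNorm_succ (n : ℕ) (p : ℝ) (f : ℂ → ℂ) :
    supSumNorm (n + 1) p f = supNorm f + supSumNorm n p (deriv f) := by
  simp only [supSumNorm, Finset.sum_range_succ', iteratedDeriv_succ', iteratedDeriv_zero]
  ring

lemma snNorm_le_supSumNorm (n : ℕ) (p : ℝ) (f : ℂ → ℂ) : snNorm n p f ≤ supSumNorm n p f := by
  induction n generalizing f with
  | zero => rw [snNorm, supSumNorm_zero]
  | succ n ih =>
    rw [snNorm, supSumNorm_succ]
    exact add_le_add (le_iSup₂_of_le (0:ℂ) (mem_ball_self one_pos) le_rfl) (ih _)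

lemma hardyNorm_one_le_supSumNorm {p : ℝ} (hp : 1 ≤ p) (n : ℕ) {g : ℂ → ℂ}
    (hg : ContinuousOn g (ball 0 1)) : hardyNorm 1 g ≤ supSumNorm n p g := by
  cases n with
  | zero => rw [supSumNorm_zero]; exact hardyNorm_one_le_hardyNorm hp hg
  | succ n => rw [supSumNorm_succ]; exact (hardyNorm_one_le_supNorm g).trans le_self_add

lemma supSumNorm_le {p : ℝ} (hp : 1 ≤ p) (n : ℕ) {f : ℂ → ℂ}
    (hf : DifferentiableOn ℂ f (ball 0 1)) :
    supSumNorm n p f ≤ (1 + ENNReal.ofReal π) ^ n * snNorm n p f := by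
  induction n generalizing f with
  | zero => rw [supSumNorm_zero, snNorm, pow_zero, one_mul]
  | succ n ih =>
    have hf' := hf.deriv isOpen_ball
    calc supSumNorm (n + 1) p f
        = supNorm f + supSumNorm n p (deriv f) := supSumNorm_succ n p f
      _ ≤ ENNReal.ofReal ‖f 0‖ + ENNReal.ofReal π * supSumNorm n p (deriv f)
          + supSumNorm n p (deriv f) := by
        gcongr
        exact (supNorm_le_add_hardyNorm_one_deriv hf).trans
          (by gcongr; exact hardyNorm_one_le_supSumNorm hp n hf'.continuousOn)
      _ = ENNReal.ofReal ‖f 0‖ + (1 + ENNReal.ofReal π) * supSumNorm n p (deriv f) := by ring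
      _ ≤ (1 + ENNReal.ofReal π) ^ (n + 1) * ENNReal.ofReal ‖f 0‖
          + (1 + ENNReal.ofReal π) * ((1 + ENNReal.ofReal π) ^ n * snNorm n p (deriv f)) := by
        gcongr
        · exact le_mul_of_one_le_left zero_le (one_le_pow₀ le_self_add)
        · exact ih hf'
      _ = (1 + ENNReal.ofReal π) ^ (n + 1) * snNorm (n + 1) p f := by
        rw [snNorm]
        ring

theorem equiv_norm_sup_sum_general (n : ℕ) (p : ℝ) (hp : 1 ≤ p) :
    ∃ C₁ C₂ : ℝ, 0 < C₁ ∧ 0 < C₂ ∧ ∀ f : ℂ → ℂ, MemS n p f →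
      snNorm n p f ≤
        ENNReal.ofReal C₁ *
          (∑ k ∈ Finset.range n, supNorm (iteratedDeriv k f) +
            hardyNorm p (iteratedDeriv n f)) ∧
      (∑ k ∈ Finset.range n, supNorm (iteratedDeriv k f) +
          hardyNorm p (iteratedDeriv n f)) ≤
        ENNReal.ofReal C₂ * snNorm n p f := by
  refine ⟨1, (1 + π) ^ n, one_pos, by positivity, fun f hf => ⟨?_, ?_⟩⟩
  · rw [ENNReal.ofReal_one, one_mul]
    exact snNorm_le_supSumNorm n p f
  · rw [ENNReal.ofReal_pow (by positivity), ENNReal.ofReal_add zero_le_one pi_pos.le,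
      ENNReal.ofReal_one]
    exact supSumNorm_le hp n hf.1

theorem equiv_norm_sup_sum (n : ℕ) (p : ℝ) (hn : 1 ≤ n) (hp : 1 ≤ p) :
    ∃ C₁ C₂ : ℝ, 0 < C₁ ∧ 0 < C₂ ∧ ∀ f : ℂ → ℂ, MemS n p f →
      snNorm n p f ≤
        ENNReal.ofReal C₁ *
          (∑ k ∈ Finset.range n, supNorm (iteratedDeriv k f) +
            hardyNorm p (iteratedDeriv n f)) ∧
      (∑ k ∈ Finset.range n, supNorm (iteratedDeriv k f) +
          hardyNorm p (iteratedDeriv n f)) ≤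
        ENNReal.ofReal C₂ * snNorm n p f :=
  equiv_norm_sup_sum_general n p hp
end

section
/- For n ≥ 1 and 1 ≤ p < ∞, one has S_{n,0}^p = z^n · S_n^p, i.e., f ∈ S_{n,0}^p if and only if f(z) = z^n g(z) for some g ∈ S_n^p. -/
open MeasureTheory Metric Set Filter

/-! Both directions compare the `n`-th derivatives of `f` and of `g = f / z ^ n` through the
Leibniz rule: on the annulus `1/2 ≤ ‖z‖ < 1`, where `z ^ n` and `z ^ (-n)` have bounded
derivatives, each is dominated by the derivatives of order `≤ n` of the other, and on the disc
of radius `1/2` everything is bounded by continuity. The derivatives of order `< n` of a function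
whose `n`-th derivative lies in `H^p` lie in `H^p` too, because `w = w 0 + Volterra w'` and the
Volterra operator is a contraction of `H^p` (Jensen's inequality in the radial variable, then
Tonelli). -/

open scoped ENNReal Topology

lemma eLpNorm_rpow_eq_lintegral {α ε : Type*} [MeasurableSpace α] [ENorm ε] {p : ℝ} (hp : 0 < p)
    (f : α → ε) (μ : Measure α) :
    eLpNorm f (ENNReal.ofReal p) μ ^ p = ∫⁻ x, ‖f x‖ₑ ^ p ∂μ := by
  rw [eLpNorm_eq_eLpNorm' (by simpa using hp) ENNReal.ofReal_ne_top,
    lintegral_rpow_enorm_eq_rpow_eLpNorm' hp, ENNReal.toReal_ofReal hp.le]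

lemma lintegral_enorm_rpow_le {α E : Type*} [MeasurableSpace α] [NormedAddCommGroup E]
    {μ : Measure α} [IsProbabilityMeasure μ] {p : ℝ} (hp : 1 ≤ p) {g : α → E}
    (hg : AEStronglyMeasurable g μ) : (∫⁻ x, ‖g x‖ₑ ∂μ) ^ p ≤ ∫⁻ x, ‖g x‖ₑ ^ p ∂μ := by
  have h := eLpNorm_le_eLpNorm_of_exponent_le (p := 1) (q := ENNReal.ofReal p)
    (by simpa using hp) hg
  rw [eLpNorm_one_eq_lintegral_enorm] at h
  rw [← eLpNorm_rpow_eq_lintegral (by linarith)]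
  exact ENNReal.rpow_le_rpow h (by linarith)

lemma AnalyticOnNhd.iteratedDeriv {𝕜 F : Type*} [NontriviallyNormedField 𝕜]
    [NormedAddCommGroup F] [NormedSpace 𝕜 F] [CompleteSpace F] {f : 𝕜 → F} {s : Set 𝕜}
    (hf : AnalyticOnNhd 𝕜 f s) (k : ℕ) : AnalyticOnNhd 𝕜 (iteratedDeriv k f) s := by
  rw [iteratedDeriv_eq_iterate]
  exact hf.iterated_deriv k

lemma iteratedDeriv_pow_mul_eq_zero {𝕜 : Type*} [NontriviallyNormedField 𝕜] {g : 𝕜 → 𝕜}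
    {m n : ℕ} (hg : ContDiffAt 𝕜 m g 0) (hmn : m < n) :
    iteratedDeriv m (fun z => z ^ n * g z) 0 = 0 := by
  rw [iteratedDeriv_fun_mul (by fun_prop) hg]
  refine Finset.sum_eq_zero fun i hi => ?_
  rw [iteratedDeriv_fun_pow_zero, if_neg (by grind)]
  simp

lemma exists_eq_pow_mul_of_iteratedDeriv_eq_zero {f : ℂ → ℂ} {s : Set ℂ} (hs : IsOpen s)
    (h0s : (0:ℂ) ∈ s) (hf : DifferentiableOn ℂ f s) {n : ℕ}
    (h0 : ∀ m < n, iteratedDeriv m f 0 = 0) :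
    ∃ g, DifferentiableOn ℂ g s ∧ ∀ z, f z = z ^ n * g z := by
  obtain ⟨g, hg0, hfg⟩ := (hf.analyticAt (hs.mem_nhds h0s)).exists_eq_sum_add_pow_mul n
  have hfg' : ∀ z, f z = z ^ n * g z := fun z => by
    rw [hfg z, Finset.sum_eq_zero fun m hm => by rw [h0 m (Finset.mem_range.1 hm), smul_zero],
      zero_add, smul_eq_mul]
  refine ⟨g, fun z hz => ?_, hfg'⟩
  rcases eq_or_ne z 0 with rfl | hz0
  · exact hg0.differentiableAt.differentiableWithinAt
  · have hquot : (fun w => f w / w ^ n) =ᶠ[𝓝 z] g := by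
      filter_upwards [isOpen_compl_singleton.mem_nhds hz0] with w hw
      rw [hfg' w, mul_div_cancel_left₀ _ (pow_ne_zero _ hw)]
    exact ((((hf z hz).differentiableAt (hs.mem_nhds hz)).div (differentiableAt_pow n)
      (pow_ne_zero _ hz0)).congr_of_eventuallyEq hquot.symm).differentiableWithinAt

lemma circleMap_mem_ball {r : ℝ} (hr : r ∈ Ioo (0:ℝ) 1) (θ : ℝ) :
    circleMap 0 r θ ∈ ball (0:ℂ) 1 := by
  simp [abs_of_pos hr.1, hr.2]

lemma ofReal_mul_mem_ball {t : ℝ} (ht : t ∈ Icc (0:ℝ) 1) {z : ℂ} (hz : z ∈ ball (0:ℂ) 1) :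
    (t:ℂ) * z ∈ ball (0:ℂ) 1 := by
  rw [mem_ball_zero_iff, norm_mul, Complex.norm_real, Real.norm_of_nonneg ht.1] at *
  nlinarith [ht.2, norm_nonneg z]

noncomputable def arcMeasure : Measure ℝ :=
  (ENNReal.ofReal (2 * Real.pi))⁻¹ • volume.restrict (Ioc 0 (2 * Real.pi))

instance : IsProbabilityMeasure arcMeasure := by
  constructor
  rw [arcMeasure, Measure.smul_apply, Measure.restrict_apply_univ, Real.volume_Ioc, sub_zero,
    smul_eq_mul, ENNReal.inv_mul_cancel (by simp [Real.pi_pos]) ENNReal.ofReal_ne_top]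

lemma hardyNorm_eq_iSup_eLpNorm {p : ℝ} (hp : 0 < p) (f : ℂ → ℂ) :
    hardyNorm p f =
      ⨆ r : Ioo (0:ℝ) 1, eLpNorm (f ∘ circleMap 0 r) (ENNReal.ofReal p) arcMeasure := by
  refine iSup_congr fun r => ?_
  rw [eLpNorm_eq_lintegral_rpow_enorm_toReal (by simpa using hp) ENNReal.ofReal_ne_top,
    ENNReal.toReal_ofReal hp.le, arcMeasure, lintegral_smul_measure, smul_eq_mul]
  simp only [Function.comp_apply, circleMap_zero]
  rw [ENNReal.div_eq_inv_mul]
  congr 3 with θ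
  rw [← ofReal_norm, ENNReal.ofReal_rpow_of_nonneg (norm_nonneg _) hp.le]

lemma eLpNorm_le_hardyNorm {p : ℝ} (hp : 0 < p) (f : ℂ → ℂ) {r : ℝ} (hr : r ∈ Ioo 0 1) :
    eLpNorm (f ∘ circleMap 0 r) (ENNReal.ofReal p) arcMeasure ≤ hardyNorm p f := by
  rw [hardyNorm_eq_iSup_eLpNorm hp]
  exact le_iSup_of_le ⟨r, hr⟩ le_rfl

lemma hardyNorm_le_of_eLpNorm_le {p : ℝ} (hp : 0 < p) {f : ℂ → ℂ} {C : ℝ≥0∞}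
    (h : ∀ r ∈ Ioo (0:ℝ) 1, eLpNorm (f ∘ circleMap 0 r) (ENNReal.ofReal p) arcMeasure ≤ C) :
    hardyNorm p f ≤ C := by
  rw [hardyNorm_eq_iSup_eLpNorm hp]
  exact iSup_le fun r => h r r.2

lemma enorm_volterra_le (v : ℂ → ℂ) {z : ℂ} (hz : ‖z‖ ≤ 1) :
    ‖Volterra v z‖ₑ ≤ ∫⁻ t in Ioc (0:ℝ) 1, ‖v (t * z)‖ₑ := by
  rw [Volterra, intervalIntegral.integral_of_le zero_le_one]
  refine (enorm_integral_le_lintegral_enorm _).trans (lintegral_mono fun t => ?_)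
  rw [enorm_mul]
  exact mul_le_of_le_one_left' (by rwa [← ofReal_norm, ENNReal.ofReal_le_one])

lemma hardyNorm_volterra_le {p : ℝ} (hp : 1 ≤ p) {v : ℂ → ℂ} (hv : ContinuousOn v (ball 0 1)) :
    hardyNorm p (Volterra v) ≤ hardyNorm p v := by
  have hp0 : 0 < p := by linarith
  refine hardyNorm_le_of_eLpNorm_le hp0 fun r hr => ?_
  set ν := volume.restrict (Ioc (0:ℝ) 1)
  have : IsProbabilityMeasure ν := ⟨by simp [ν]⟩
  have hcont : ContinuousOn (fun q : ℝ × ℝ => v (q.2 * circleMap 0 r q.1)) (univ ×ˢ Ioc 0 1) :=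
    hv.comp (by fun_prop) fun q hq =>
      ofReal_mul_mem_ball (Ioc_subset_Icc_self hq.2) (circleMap_mem_ball hr q.1)
  have hslice : ∀ θ, ContinuousOn (fun t : ℝ => v (t * circleMap 0 r θ)) (Ioc 0 1) := fun θ =>
    hv.comp (by fun_prop) fun t ht =>
      ofReal_mul_mem_ball (Ioc_subset_Icc_self ht) (circleMap_mem_ball hr θ)
  have hG : AEMeasurable (Function.uncurry fun θ (t : ℝ) => ‖v (t * circleMap 0 r θ)‖ₑ ^ p)
      (arcMeasure.prod ν) := by
    have h := (((ENNReal.continuous_rpow_const (y := p)).comp continuous_enorm).comp_continuousOn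
      hcont).aemeasurable (μ := arcMeasure.prod volume) (MeasurableSet.univ.prod measurableSet_Ioc)
    rwa [← Measure.prod_restrict, Measure.restrict_univ] at h
  rw [← ENNReal.rpow_le_rpow_iff hp0, eLpNorm_rpow_eq_lintegral hp0]
  calc ∫⁻ θ, ‖Volterra v (circleMap 0 r θ)‖ₑ ^ p ∂arcMeasure
      ≤ ∫⁻ θ, (∫⁻ t, ‖v (t * circleMap 0 r θ)‖ₑ ∂ν) ^ p ∂arcMeasure :=
        lintegral_mono fun θ => ENNReal.rpow_le_rpow
          (enorm_volterra_le v (by simp [abs_of_pos hr.1, hr.2.le])) hp0.le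
    _ ≤ ∫⁻ θ, ∫⁻ t, ‖v (t * circleMap 0 r θ)‖ₑ ^ p ∂ν ∂arcMeasure :=
        lintegral_mono fun θ => lintegral_enorm_rpow_le hp
          ((hslice θ).aestronglyMeasurable measurableSet_Ioc)
    _ = ∫⁻ t, ∫⁻ θ, ‖v (circleMap 0 (t * r) θ)‖ₑ ^ p ∂arcMeasure ∂ν := by
        rw [lintegral_lintegral_swap hG]
        simp only [circleMap_zero, Complex.ofReal_mul, mul_assoc]
    _ ≤ ∫⁻ t, hardyNorm p v ^ p ∂ν := by
        refine setLIntegral_mono' measurableSet_Ioc fun t ht => ?_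
        rw [← eLpNorm_rpow_eq_lintegral hp0]
        refine ENNReal.rpow_le_rpow (eLpNorm_le_hardyNorm hp0 v ⟨mul_pos ht.1 hr.1, ?_⟩) hp0.le
        nlinarith [ht.2, hr.1, hr.2]
    _ = hardyNorm p v ^ p := by simp [ν]

lemma volterra_deriv_eq_sub {w : ℂ → ℂ} (hw : DifferentiableOn ℂ w (ball 0 1)) {z : ℂ}
    (hz : z ∈ ball (0:ℂ) 1) : Volterra (deriv w) z = w z - w 0 := by
  have hw' := hw.analyticOnNhd isOpen_ball
  have hmem : ∀ t ∈ uIcc (0:ℝ) 1, (t:ℂ) * z ∈ ball (0:ℂ) 1 := fun t ht =>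
    ofReal_mul_mem_ball (by rwa [uIcc_of_le zero_le_one] at ht) hz
  have hderiv : ∀ t ∈ uIcc (0:ℝ) 1,
      HasDerivAt (fun s : ℝ => w (s * z)) (z * deriv w (t * z)) t := fun t ht => by
    have h := ((hw' _ (hmem t ht)).differentiableAt.hasDerivAt).comp (t:ℂ) (hasDerivAt_mul_const z)
    simpa [mul_comm] using h.comp_ofReal
  have hint : IntervalIntegrable (fun t : ℝ => z * deriv w (t * z)) volume 0 1 :=
    (continuousOn_const.mul (hw'.deriv.continuousOn.comp (by fun_prop) hmem)).intervalIntegrable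
  simpa [Volterra] using intervalIntegral.integral_eq_sub_of_hasDerivAt hderiv hint

lemma hardyNorm_le_enorm_add_hardyNorm_deriv {p : ℝ} (hp : 1 ≤ p) {w : ℂ → ℂ}
    (hw : DifferentiableOn ℂ w (ball 0 1)) :
    hardyNorm p w ≤ ‖w 0‖ₑ + hardyNorm p (deriv w) := by
  have hp0 : 0 < p := by linarith
  refine hardyNorm_le_of_eLpNorm_le hp0 fun r hr => ?_
  have hvolterra : Volterra (deriv w) ∘ circleMap 0 r = fun θ => w (circleMap 0 r θ) - w 0 := by
    funext θ
    exact volterra_deriv_eq_sub hw (circleMap_mem_ball hr θ)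
  have hmeas : AEStronglyMeasurable (Volterra (deriv w) ∘ circleMap 0 r) arcMeasure := by
    rw [hvolterra]
    exact ((hw.continuousOn.comp_continuous (continuous_circleMap 0 r)
      (circleMap_mem_ball hr)).sub continuous_const).aestronglyMeasurable
  have hsplit : w ∘ circleMap 0 r = (fun _ => w 0) + Volterra (deriv w) ∘ circleMap 0 r := by
    rw [hvolterra]
    funext θ
    simp
  rw [hsplit]
  refine (eLpNorm_add_le aestronglyMeasurable_const hmeas (by simpa using hp)).trans
    (add_le_add ?_ ?_)
  · rw [eLpNorm_const' _ (by simpa using hp0) ENNReal.ofReal_ne_top, measure_univ, ENNReal.one_rpow,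
      mul_one]
  · exact (eLpNorm_le_hardyNorm hp0 _ hr).trans
      (hardyNorm_volterra_le hp (hw.analyticOnNhd isOpen_ball).deriv.continuousOn)

lemma hardyNorm_iteratedDeriv_lt_top {p : ℝ} (hp : 1 ≤ p) {u : ℂ → ℂ}
    (hu : DifferentiableOn ℂ u (ball 0 1)) {n k : ℕ} (hk : k ≤ n)
    (hn : hardyNorm p (iteratedDeriv n u) < ⊤) : hardyNorm p (iteratedDeriv k u) < ⊤ := by
  induction hk using Nat.decreasingInduction with
  | self => exact hn
  | of_succ k _ ih =>
    refine (hardyNorm_le_enorm_add_hardyNorm_deriv hp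
      ((hu.analyticOnNhd isOpen_ball).iteratedDeriv k).differentiableOn).trans_lt ?_
    rw [← iteratedDeriv_succ]
    exact ENNReal.add_lt_top.2 ⟨enorm_lt_top, ih⟩

lemma hardyNorm_lt_top_of_norm_le_sum {ι : Type*} {p ρ c : ℝ} (hp : 1 ≤ p) (hρ : ρ < 1)
    {u : ℂ → ℂ} {v : ι → ℂ → ℂ} {s : Finset ι} (hu : ContinuousOn u (ball 0 1))
    (hv : ∀ i ∈ s, ContinuousOn (v i) (ball 0 1)) (hvp : ∀ i ∈ s, hardyNorm p (v i) < ⊤)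
    (hle : ∀ z ∈ ball (0:ℂ) 1, ρ ≤ ‖z‖ → ‖u z‖ ≤ c * ∑ i ∈ s, ‖v i z‖) :
    hardyNorm p u < ⊤ := by
  have hp0 : 0 < p := by linarith
  obtain ⟨M, hM⟩ := (isCompact_closedBall (0:ℂ) ρ).exists_bound_of_continuousOn
    (hu.mono (closedBall_subset_ball hρ))
  refine (hardyNorm_le_of_eLpNorm_le hp0
    (C := ENNReal.ofReal M ⊔ ‖c‖ₑ * ∑ i ∈ s, hardyNorm p (v i)) fun r hr => ?_).trans_lt
    (sup_lt_iff.2 ⟨ENNReal.ofReal_lt_top,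
      ENNReal.mul_lt_top enorm_lt_top (ENNReal.sum_lt_top.2 hvp)⟩)
  rcases le_or_gt r ρ with hrρ | hρr
  · refine le_sup_of_le_left ((eLpNorm_le_of_ae_bound (ae_of_all _ fun θ => hM _ ?_)).trans ?_)
    · simp [abs_of_pos hr.1, hrρ]
    · simp
  · refine le_sup_of_le_right ?_
    have hcirc : ∀ i ∈ s, AEStronglyMeasurable (fun θ => ‖v i (circleMap 0 r θ)‖) arcMeasure :=
      fun i hi => ((hv i hi).comp_continuous (continuous_circleMap 0 r)
        (circleMap_mem_ball hr)).norm.aestronglyMeasurable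
    calc eLpNorm (u ∘ circleMap 0 r) (ENNReal.ofReal p) arcMeasure
        ≤ eLpNorm (c • ∑ i ∈ s, fun θ => ‖v i (circleMap 0 r θ)‖) (ENNReal.ofReal p)
            arcMeasure := by
          refine eLpNorm_mono fun θ => ?_
          simp only [Pi.smul_apply, Finset.sum_apply, smul_eq_mul, Real.norm_eq_abs]
          exact (hle _ (circleMap_mem_ball hr θ) (by simp [abs_of_pos hr.1, hρr.le])).trans
            (le_abs_self _)
      _ = ‖c‖ₑ * eLpNorm (∑ i ∈ s, fun θ => ‖v i (circleMap 0 r θ)‖) (ENNReal.ofReal p)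
            arcMeasure := eLpNorm_const_smul _ _ _ _
      _ ≤ ‖c‖ₑ * ∑ i ∈ s, eLpNorm (fun θ => ‖v i (circleMap 0 r θ)‖) (ENNReal.ofReal p)
            arcMeasure := by
          gcongr
          exact eLpNorm_sum_le hcirc (by simpa using hp)
      _ ≤ ‖c‖ₑ * ∑ i ∈ s, hardyNorm p (v i) := by
          gcongr with i
          exact (eLpNorm_norm _).trans_le (eLpNorm_le_hardyNorm hp0 _ hr)

lemma hardyNorm_iteratedDeriv_lt_top_of_eqOn_mul {p : ℝ} (hp : 1 ≤ p) {n : ℕ} {φ u h : ℂ → ℂ}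
    (hφ : AnalyticOnNhd ℂ φ {0}ᶜ) (hu : DifferentiableOn ℂ u (ball 0 1))
    (hh : DifferentiableOn ℂ h (ball 0 1)) (hhu : EqOn h (φ * u) (ball 0 1 \ {0}))
    (hun : hardyNorm p (iteratedDeriv n u) < ⊤) : hardyNorm p (iteratedDeriv n h) < ⊤ := by
  have hu' := hu.analyticOnNhd isOpen_ball
  have hK : closedBall (0:ℂ) 1 \ ball 0 (1/2) ⊆ {0}ᶜ := fun z hz h0 =>
    hz.2 (by rw [mem_singleton_iff.1 h0]; simp)
  obtain ⟨M, hM⟩ := ((isCompact_closedBall (0:ℂ) 1).diff isOpen_ball).exists_bound_of_continuousOn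
    (f := fun z => ∑ j ∈ Finset.range (n+1), ‖iteratedDeriv j φ z‖)
    (continuousOn_finsetSum _ fun j _ => ((hφ.iteratedDeriv j).continuousOn.mono hK).norm)
  refine hardyNorm_lt_top_of_norm_le_sum hp (ρ := 1/2) (c := 2 ^ n * M) (s := Finset.range (n+1))
    (v := fun i => iteratedDeriv (n - i) u) (by norm_num)
    ((hh.analyticOnNhd isOpen_ball).iteratedDeriv n).continuousOn
    (fun i _ => (hu'.iteratedDeriv _).continuousOn)
    (fun i _ => hardyNorm_iteratedDeriv_lt_top hp hu (Nat.sub_le n i) hun) fun z hz hz2 => ?_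
  have hz0 : z ≠ 0 := by rintro rfl; norm_num at hz2
  have hφz : ∀ i ∈ Finset.range (n+1), ‖iteratedDeriv i φ z‖ ≤ M := fun i hi =>
    (Finset.single_le_sum (f := fun j => ‖iteratedDeriv j φ z‖) (fun _ _ => norm_nonneg _) hi).trans
      ((le_abs_self _).trans (hM z ⟨ball_subset_closedBall hz, by simpa using hz2⟩))
  have hev : h =ᶠ[𝓝 z] φ * u :=
    Filter.eventuallyEq_of_mem ((isOpen_ball.sdiff isClosed_singleton).mem_nhds ⟨hz, hz0⟩) hhu
  rw [hev.iteratedDeriv_eq, iteratedDeriv_mul (hφ z hz0).contDiffAt (hu' z hz).contDiffAt,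
    Finset.mul_sum]
  refine (norm_sum_le _ _).trans (Finset.sum_le_sum fun i hi => ?_)
  rw [norm_mul, norm_mul, Complex.norm_natCast]
  gcongr
  · exact_mod_cast Nat.choose_le_two_pow n i
  · exact hφz i hi

theorem S0_eq_zn_S_general (n : ℕ) (p : ℝ) (hp : 1 ≤ p) (f : ℂ → ℂ) :
    MemS0 n p f ↔ ∃ g : ℂ → ℂ, MemS n p g ∧
      ∀ z ∈ Metric.ball (0:ℂ) 1, f z = z ^ n * g z := by
  have h0 : ball (0:ℂ) 1 ∈ 𝓝 0 := isOpen_ball.mem_nhds (mem_ball_self one_pos)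
  constructor
  · rintro ⟨⟨hf, hfp⟩, hf0⟩
    obtain ⟨g, hg, hfg⟩ :=
      exists_eq_pow_mul_of_iteratedDeriv_eq_zero isOpen_ball (mem_of_mem_nhds h0) hf hf0
    refine ⟨g, ⟨hg, ?_⟩, fun z _ => hfg z⟩
    refine hardyNorm_iteratedDeriv_lt_top_of_eqOn_mul hp (φ := fun z => (z ^ n)⁻¹)
      (fun z hz => (analyticAt_id.pow n).inv (pow_ne_zero n hz)) hf hg (fun z hz => ?_) hfp
    simp [hfg z, pow_ne_zero n hz.2]
  · rintro ⟨g, ⟨hg, hgp⟩, hfg⟩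
    have hf : DifferentiableOn ℂ f (ball 0 1) :=
      ((differentiable_pow n).differentiableOn.mul hg).congr hfg
    refine ⟨⟨hf, hardyNorm_iteratedDeriv_lt_top_of_eqOn_mul hp (φ := (· ^ n))
      (fun z _ => analyticAt_id.pow n) hg hf (fun z hz => hfg z hz.1) hgp⟩, fun m hm => ?_⟩
    rw [(Filter.eventuallyEq_of_mem h0 hfg).iteratedDeriv_eq]
    exact iteratedDeriv_pow_mul_eq_zero (hg.analyticAt h0).contDiffAt hm

theorem S0_eq_zn_S (n : ℕ) (p : ℝ) (hn : 1 ≤ n) (hp : 1 ≤ p) (f : ℂ → ℂ) :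
    MemS0 n p f ↔ ∃ g : ℂ → ℂ, MemS n p g ∧
      ∀ z ∈ Metric.ball (0:ℂ) 1, f z = z ^ n * g z :=
  S0_eq_zn_S_general n p hp f
end
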